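/- arXiv:1904.08954 — 2 statements merged into one kernel-verified Lean document; each statement's English description precedes it below -/
import Mathlib

section
/- Let n, ρ be positive integers, let r ≥ 1 with ρ^r ∣ n. In the permutation tree construction, each level-(r-1) partition (a partition of Fin n into n/ρ^{r-1} ordered blocks of size ρ^{r-1}) has exactly (n/ρ^{r-1})! / (n/ρ^r)! children at level r, where a child is obtained by grouping the blocks into n/ρ^r ordered groups of ρ blocks each and concatenating. -/
/-- A partition of `Fin n` into `k` pairwise disjoint ordered blocks (injective tuples)
of length `b`, covering all of `Fin n`; the collection of blocks is unordered. -/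
def IsOrderedPartition (n k b : ℕ) (P : Finset (Fin b ↪ Fin n)) : Prop :=
  P.card = k ∧
  (∀ e ∈ P, ∀ e' ∈ P, e ≠ e' → Disjoint (Finset.univ.map e) (Finset.univ.map e')) ∧
  P.biUnion (fun e => Finset.univ.map e) = Finset.univ

/-- `S'` (blocks of length `ρ*b`) is a child of `S` (blocks of length `b`): every block
of `S'` is a concatenation of `ρ` blocks of `S`. -/
def IsChild (n ρ b : ℕ) (S : Finset (Fin b ↪ Fin n))
    (S' : Finset (Fin (ρ * b) ↪ Fin n)) : Prop :=
  ∀ e' ∈ S', ∀ j : Fin ρ, ∃ e ∈ S, ∀ i : Fin b,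
    e' ⟨j.val * b + i.val, by
      have hi := i.isLt
      have hj := j.isLt
      nlinarith⟩ = e i

namespace Stmt5Aux

open Finset Function

/-- Two blocks of a pairwise-disjoint family that share a value are equal. -/
lemma eq_of_eval_eq {n b : ℕ} {S : Finset (Fin b ↪ Fin n)}
    (hdisj : ∀ e ∈ S, ∀ e' ∈ S, e ≠ e' → Disjoint (Finset.univ.map e) (Finset.univ.map e'))
    {e f : Fin b ↪ Fin n} (he : e ∈ S) (hf : f ∈ S) {i i' : Fin b}
    (h : e i = f i') : e = f := by
  by_contra hne
  have hd := hdisj e he f hf hne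
  have h1 : e i ∈ Finset.univ.map e := mem_map.2 ⟨i, mem_univ _, rfl⟩
  have h2 : e i ∈ Finset.univ.map f := by
    rw [h]; exact mem_map.2 ⟨i', mem_univ _, rfl⟩
  exact (Finset.disjoint_left.1 hd h1) h2

lemma idx_lt {ρ b : ℕ} (t : Fin ρ) (i : Fin b) : t.val * b + i.val < ρ * b := by
  have h1 : t.val + 1 ≤ ρ := t.isLt
  have h2 : i.val < b := i.isLt
  calc t.val * b + i.val < (t.val + 1) * b := by nlinarith
    _ ≤ ρ * b := Nat.mul_le_mul_right b h1

variable {n ρ b m : ℕ}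

lemma div_lt_aux (x : Fin (ρ * b)) : x.val / b < ρ :=
  Nat.div_lt_of_lt_mul (lt_of_lt_of_eq x.isLt (mul_comm ρ b))

/-- The concatenated block of `ρ` parent blocks selected by `E` in row `j`. -/
def blockE (hb : 0 < b) {S : Finset (Fin b ↪ Fin n)}
    (hdisj : ∀ e ∈ S, ∀ e' ∈ S, e ≠ e' → Disjoint (Finset.univ.map e) (Finset.univ.map e'))
    (E : Fin m × Fin ρ ≃ {x // x ∈ S}) (j : Fin m) : Fin (ρ * b) ↪ Fin n where
  toFun := fun x => (E (j, ⟨x.val / b, div_lt_aux x⟩)).1 ⟨x.val % b, Nat.mod_lt _ hb⟩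
  inj' := by
    intro x y hxy
    simp only at hxy
    have hEq : (E (j, ⟨x.val / b, div_lt_aux x⟩)).1 = (E (j, ⟨y.val / b, div_lt_aux y⟩)).1 :=
      eq_of_eval_eq hdisj (E _).2 (E _).2 hxy
    have hE : (⟨j, ⟨x.val / b, div_lt_aux x⟩⟩ : Fin m × Fin ρ)
        = ⟨j, ⟨y.val / b, div_lt_aux y⟩⟩ := E.injective (Subtype.ext hEq)
    have hdiv : x.val / b = y.val / b := by
      have := congrArg (fun p => (Prod.snd p).val) hE
      simpa using this
    rw [hE] at hxy
    have hmod : x.val % b = y.val % b := by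
      have := (E (j, ⟨y.val / b, div_lt_aux y⟩)).1.injective hxy
      simpa using this
    have h1 := Nat.div_add_mod x.val b
    have h2 := Nat.div_add_mod y.val b
    rw [hdiv, hmod] at h1
    exact Fin.ext (by omega)

lemma blockE_apply (hb : 0 < b) {S : Finset (Fin b ↪ Fin n)}
    (hdisj : ∀ e ∈ S, ∀ e' ∈ S, e ≠ e' → Disjoint (Finset.univ.map e) (Finset.univ.map e'))
    (E : Fin m × Fin ρ ≃ {x // x ∈ S}) (j : Fin m) (x : Fin (ρ * b)) (t : Fin ρ) (i : Fin b)
    (h1 : x.val / b = t.val) (h2 : x.val % b = i.val) :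
    blockE hb hdisj E j x = (E (j, t)).1 i := by
  obtain ⟨tv, htv⟩ := t
  obtain ⟨iv, hiv⟩ := i
  simp only at h1 h2
  subst h1
  subst h2
  rfl

lemma div_idx (hb : 0 < b) (t : Fin ρ) (i : Fin b) : (t.val * b + i.val) / b = t.val := by
  rw [mul_comm t.val b, Nat.mul_add_div hb, Nat.div_eq_of_lt i.isLt, Nat.add_zero]

lemma mod_idx (t : Fin ρ) (i : Fin b) : (t.val * b + i.val) % b = i.val := by
  rw [mul_comm t.val b, Nat.mul_add_mod, Nat.mod_eq_of_lt i.isLt]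

lemma blockE_apply' (hb : 0 < b) {S : Finset (Fin b ↪ Fin n)}
    (hdisj : ∀ e ∈ S, ∀ e' ∈ S, e ≠ e' → Disjoint (Finset.univ.map e) (Finset.univ.map e'))
    (E : Fin m × Fin ρ ≃ {x // x ∈ S}) (j : Fin m) (t : Fin ρ) (i : Fin b)
    (h : t.val * b + i.val < ρ * b) :
    blockE hb hdisj E j ⟨t.val * b + i.val, h⟩ = (E (j, t)).1 i :=
  blockE_apply hb hdisj E j _ t i (div_idx hb t i) (mod_idx t i)

/-- Membership in the image of a concatenated block. -/
lemma mem_map_blockE (hb : 0 < b) {S : Finset (Fin b ↪ Fin n)}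
    (hdisj : ∀ e ∈ S, ∀ e' ∈ S, e ≠ e' → Disjoint (Finset.univ.map e) (Finset.univ.map e'))
    (E : Fin m × Fin ρ ≃ {x // x ∈ S}) (j : Fin m) (x : Fin n) :
    x ∈ Finset.univ.map (blockE hb hdisj E j) ↔ ∃ t : Fin ρ, ∃ i : Fin b, (E (j, t)).1 i = x := by
  constructor
  · rintro h
    obtain ⟨a, -, ha⟩ := mem_map.1 h
    refine ⟨⟨a.val / b, div_lt_aux a⟩, ⟨a.val % b, Nat.mod_lt _ hb⟩, ?_⟩
    rw [← blockE_apply hb hdisj E j a _ _ rfl rfl]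
    exact ha
  · rintro ⟨t, i, hti⟩
    refine mem_map.2 ⟨⟨t.val * b + i.val, idx_lt t i⟩, mem_univ _, ?_⟩
    rw [blockE_apply' hb hdisj E j t i]; exact hti

lemma blockE_injective (hb : 0 < b) {S : Finset (Fin b ↪ Fin n)}
    (hdisj : ∀ e ∈ S, ∀ e' ∈ S, e ≠ e' → Disjoint (Finset.univ.map e) (Finset.univ.map e'))
    (E : Fin m × Fin ρ ≃ {x // x ∈ S}) (hρ : 0 < ρ) :
    Function.Injective (blockE hb hdisj E) := by
  intro j j' h
  have h0 : (E (j, ⟨0, hρ⟩)).1 ⟨0, hb⟩ = (E (j', ⟨0, hρ⟩)).1 ⟨0, hb⟩ := by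
    have := congrArg (fun e : Fin (ρ * b) ↪ Fin n =>
      e ⟨(⟨0, hρ⟩ : Fin ρ).val * b + (⟨0, hb⟩ : Fin b).val, idx_lt _ _⟩) h
    simp only at this
    rwa [blockE_apply' hb hdisj E j ⟨0, hρ⟩ ⟨0, hb⟩,
      blockE_apply' hb hdisj E j' ⟨0, hρ⟩ ⟨0, hb⟩] at this
  have hEq : (E (j, ⟨0, hρ⟩)).1 = (E (j', ⟨0, hρ⟩)).1 :=
    eq_of_eval_eq hdisj (E _).2 (E _).2 h0
  have := E.injective (Subtype.ext hEq)
  exact (Prod.ext_iff.1 this).1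

/-- The child partition induced by a bijective arrangement `E`. -/
def childE (hb : 0 < b) {S : Finset (Fin b ↪ Fin n)}
    (hdisj : ∀ e ∈ S, ∀ e' ∈ S, e ≠ e' → Disjoint (Finset.univ.map e) (Finset.univ.map e'))
    (E : Fin m × Fin ρ ≃ {x // x ∈ S}) : Finset (Fin (ρ * b) ↪ Fin n) :=
  Finset.univ.image (blockE hb hdisj E)

/-- Canonical enumeration of a finset of blocks. -/
noncomputable def cOf (hle : ρ * b ≤ n) (T : Finset (Fin (ρ * b) ↪ Fin n)) (j : Fin m) :
    Fin (ρ * b) ↪ Fin n :=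
  T.toList.getD j.val (Fin.castLEEmb hle)

lemma cOf_mem (hle : ρ * b ≤ n) {T : Finset (Fin (ρ * b) ↪ Fin n)} (hT : T.card = m)
    (j : Fin m) : cOf hle T j ∈ T := by
  have hlt : j.val < T.toList.length := by rw [Finset.length_toList, hT]; exact j.isLt
  rw [cOf, List.getD_eq_getElem _ _ hlt]
  exact Finset.mem_toList.1 (List.getElem_mem hlt)

lemma cOf_inj (hle : ρ * b ≤ n) {T : Finset (Fin (ρ * b) ↪ Fin n)} (hT : T.card = m)
    {j j' : Fin m} (h : cOf hle T j = cOf hle T j') : j = j' := by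
  have hlt : j.val < T.toList.length := by rw [Finset.length_toList, hT]; exact j.isLt
  have hlt' : j'.val < T.toList.length := by rw [Finset.length_toList, hT]; exact j'.isLt
  rw [cOf, cOf, List.getD_eq_getElem _ _ hlt, List.getD_eq_getElem _ _ hlt'] at h
  exact Fin.ext (((Finset.nodup_toList T).getElem_inj_iff).1 h)

lemma cOf_surj (hle : ρ * b ≤ n) {T : Finset (Fin (ρ * b) ↪ Fin n)} (hT : T.card = m)
    {x : Fin (ρ * b) ↪ Fin n} (hx : x ∈ T) : ∃ j : Fin m, cOf hle T j = x := by
  obtain ⟨i, hi, hix⟩ := List.mem_iff_getElem.1 (Finset.mem_toList.2 hx)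
  refine ⟨⟨i, by rw [Finset.length_toList, hT] at hi; exact hi⟩, ?_⟩
  rw [cOf, List.getD_eq_getElem _ _ hi]; exact hix

lemma childE_card (hρ : 0 < ρ) (hb : 0 < b) {S : Finset (Fin b ↪ Fin n)}
    (hdisj : ∀ e ∈ S, ∀ e' ∈ S, e ≠ e' → Disjoint (Finset.univ.map e) (Finset.univ.map e'))
    (E : Fin m × Fin ρ ≃ {x // x ∈ S}) : (childE hb hdisj E).card = m := by
  rw [childE, Finset.card_image_of_injective _ (blockE_injective hb hdisj E hρ), card_univ,
    Fintype.card_fin]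

lemma childE_disjoint (hb : 0 < b) {S : Finset (Fin b ↪ Fin n)}
    (hdisj : ∀ e ∈ S, ∀ e' ∈ S, e ≠ e' → Disjoint (Finset.univ.map e) (Finset.univ.map e'))
    (E : Fin m × Fin ρ ≃ {x // x ∈ S}) :
    ∀ e' ∈ childE hb hdisj E, ∀ f' ∈ childE hb hdisj E, e' ≠ f' →
      Disjoint (Finset.univ.map e') (Finset.univ.map f') := by
  intro e' he' f' hf' hne
  obtain ⟨j, -, rfl⟩ := mem_image.1 he'
  obtain ⟨j', -, rfl⟩ := mem_image.1 hf'
  rw [Finset.disjoint_left]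
  intro x hx hx'
  obtain ⟨t, i, hti⟩ := (mem_map_blockE hb hdisj E j x).1 hx
  obtain ⟨t', i', hti'⟩ := (mem_map_blockE hb hdisj E j' x).1 hx'
  have hEq : (E (j, t)).1 = (E (j', t')).1 :=
    eq_of_eval_eq hdisj (E _).2 (E _).2 (hti.trans hti'.symm)
  have hj : j = j' := congrArg Prod.fst (E.injective (Subtype.ext hEq))
  exact hne (by rw [hj])

lemma childE_cover (hb : 0 < b) {S : Finset (Fin b ↪ Fin n)}
    (hdisj : ∀ e ∈ S, ∀ e' ∈ S, e ≠ e' → Disjoint (Finset.univ.map e) (Finset.univ.map e'))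
    (hcov : S.biUnion (fun e => Finset.univ.map e) = Finset.univ)
    (E : Fin m × Fin ρ ≃ {x // x ∈ S}) :
    (childE hb hdisj E).biUnion (fun e => Finset.univ.map e) = Finset.univ := by
  apply Finset.eq_univ_iff_forall.2
  intro x
  have hx : x ∈ S.biUnion (fun e => Finset.univ.map e) := by rw [hcov]; exact mem_univ x
  obtain ⟨e, he, hxe⟩ := Finset.mem_biUnion.1 hx
  obtain ⟨i, -, hi⟩ := mem_map.1 hxe
  set p := E.symm ⟨e, he⟩ with hp
  have hep : (E (p.1, p.2)).1 = e := by
    rw [Prod.mk.eta, hp, E.apply_symm_apply]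
  refine Finset.mem_biUnion.2 ⟨blockE hb hdisj E p.1, mem_image.2 ⟨p.1, mem_univ _, rfl⟩, ?_⟩
  exact (mem_map_blockE hb hdisj E p.1 x).2 ⟨p.2, i, by rw [hep]; exact hi⟩

lemma childE_isChild (hb : 0 < b) {S : Finset (Fin b ↪ Fin n)}
    (hdisj : ∀ e ∈ S, ∀ e' ∈ S, e ≠ e' → Disjoint (Finset.univ.map e) (Finset.univ.map e'))
    (E : Fin m × Fin ρ ≃ {x // x ∈ S}) : IsChild n ρ b S (childE hb hdisj E) := by
  intro e' he' t
  obtain ⟨j, -, rfl⟩ := mem_image.1 he'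
  exact ⟨(E (j, t)).1, (E (j, t)).2, fun i => blockE_apply' hb hdisj E j t i _⟩

end Stmt5Aux

open Stmt5Aux Finset Function in
theorem childCount (n ρ b : ℕ) (hρ : 0 < ρ) (hb : 0 < b) (hn : 0 < n) (hd : ρ * b ∣ n)
    (S : Finset (Fin b ↪ Fin n)) (hS : IsOrderedPartition n (n / b) b S) :
    Nat.card {S' : Finset (Fin (ρ * b) ↪ Fin n) //
        IsOrderedPartition n (n / (ρ * b)) (ρ * b) S' ∧ IsChild n ρ b S S'}
      = Nat.factorial (n / b) / Nat.factorial (n / (ρ * b)) := by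
  classical
  obtain ⟨w, hw⟩ := hd
  have hρb : 0 < ρ * b := Nat.mul_pos hρ hb
  have hm : n / (ρ * b) = w := by rw [hw]; exact Nat.mul_div_cancel_left w hρb
  have hk : n / b = w * ρ := by
    have h1 : n = b * (w * ρ) := by rw [hw]; ring
    rw [h1, Nat.mul_div_cancel_left _ hb]
  have hle : ρ * b ≤ n := Nat.le_of_dvd hn ⟨w, hw⟩
  obtain ⟨cardS, hdisj, hcov⟩ := hS
  -- the parts of every induced child
  have hpartE : ∀ E : Fin w × Fin ρ ≃ {x // x ∈ S},
      IsOrderedPartition n (n / (ρ * b)) (ρ * b) (childE hb hdisj E) := fun E =>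
    ⟨by rw [hm]; exact childE_card hρ hb hdisj E, childE_disjoint hb hdisj E,
      childE_cover hb hdisj hcov E⟩
  -- the canonical index of each induced block
  have hex : ∀ (E : Fin w × Fin ρ ≃ {x // x ∈ S}) (j : Fin w),
      ∃ j', cOf hle (childE hb hdisj E) j' = blockE hb hdisj E j := fun E j =>
    cOf_surj hle (childE_card hρ hb hdisj E) (mem_image.2 ⟨j, mem_univ _, rfl⟩)
  choose pOf hpOf using hex
  have pOf_inj : ∀ E, Function.Injective (pOf E) := by
    intro E j j' h
    have h1 := hpOf E j
    rw [h, hpOf E j'] at h1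
    exact blockE_injective hb hdisj E hρ h1.symm
  let permOf : (Fin w × Fin ρ ≃ {x // x ∈ S}) → Equiv.Perm (Fin w) := fun E =>
    Equiv.ofBijective (pOf E) (Finite.injective_iff_bijective.1 (pOf_inj E))
  let G : (Fin w × Fin ρ ≃ {x // x ∈ S}) →
      {S' : Finset (Fin (ρ * b) ↪ Fin n) //
        IsOrderedPartition n (n / (ρ * b)) (ρ * b) S' ∧ IsChild n ρ b S S'} ×
      Equiv.Perm (Fin w) :=
    fun E => (⟨childE hb hdisj E, hpartE E, childE_isChild hb hdisj E⟩, permOf E)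
  have hGinj : Function.Injective G := by
    intro E E' hG
    have hchild : childE hb hdisj E = childE hb hdisj E' :=
      Subtype.ext_iff.1 (congrArg Prod.fst hG)
    have hperm : ∀ j, pOf E j = pOf E' j := fun j =>
      congrFun (congrArg (fun π : Equiv.Perm (Fin w) => (π : Fin w → Fin w))
        (congrArg Prod.snd hG)) j
    have hbl : ∀ j, blockE hb hdisj E j = blockE hb hdisj E' j := by
      intro j
      have h1 := hpOf E j
      rw [hchild, hperm j, hpOf E' j] at h1
      exact h1.symm
    apply Equiv.ext
    rintro ⟨j, t⟩
    apply Subtype.ext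
    apply DFunLike.ext
    intro i
    rw [← blockE_apply' hb hdisj E j t i (idx_lt t i),
      ← blockE_apply' hb hdisj E' j t i (idx_lt t i), hbl j]
  have hGsurj : Function.Surjective G := by
    rintro ⟨⟨S', hpart', hchild'⟩, π⟩
    obtain ⟨cardS', hdisj', hcov'⟩ := hpart'
    have cardS'w : S'.card = w := by rw [cardS', hm]
    choose par hparS hpar using id hchild'
    have hcmem : ∀ j : Fin w, cOf hle S' j ∈ S' := fun j => cOf_mem hle cardS'w j
    let g : Fin w × Fin ρ → {x // x ∈ S} := fun p =>
      ⟨par (cOf hle S' (π p.1)) (hcmem _) p.2, hparS _ _ _⟩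
    have hgdef : ∀ (j : Fin w) (t : Fin ρ) (i : Fin b) (pf : t.val * b + i.val < ρ * b),
        cOf hle S' (π j) ⟨t.val * b + i.val, pf⟩ = (g (j, t)).1 i := fun j t i pf =>
      hpar _ _ t i
    have hginj : Function.Injective g := by
      rintro ⟨j, t⟩ ⟨j', t'⟩ hg
      have hgv : (g (j, t)).1 = (g (j', t')).1 := congrArg Subtype.val hg
      have h0 : cOf hle S' (π j) ⟨t.val * b + (⟨0, hb⟩ : Fin b).val, idx_lt t ⟨0, hb⟩⟩
          = cOf hle S' (π j') ⟨t'.val * b + (⟨0, hb⟩ : Fin b).val, idx_lt t' ⟨0, hb⟩⟩ := by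
        rw [hgdef j t ⟨0, hb⟩ _, hgdef j' t' ⟨0, hb⟩ _, hgv]
      have hc : cOf hle S' (π j) = cOf hle S' (π j') :=
        eq_of_eval_eq hdisj' (hcmem _) (hcmem _) h0
      have hj : j = j' := π.injective (cOf_inj hle cardS'w hc)
      subst hj
      rw [hc] at h0
      have ht : t.val * b + 0 = t'.val * b + 0 :=
        congrArg Fin.val ((cOf hle S' (π j)).injective h0)
      have : t = t' := Fin.ext (Nat.eq_of_mul_eq_mul_right hb (by omega))
      rw [this]
    have hgbij : Function.Bijective g := by
      refine (Fintype.bijective_iff_injective_and_card g).2 ⟨hginj, ?_⟩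
      simp [Fintype.card_coe, cardS, hk]
    refine ⟨Equiv.ofBijective g hgbij, ?_⟩
    set E := Equiv.ofBijective g hgbij with hE
    have hEg : ∀ p, E p = g p := fun p => rfl
    have hblk : ∀ j, blockE hb hdisj E j = cOf hle S' (π j) := by
      intro j
      apply DFunLike.ext
      intro x
      rw [blockE_apply hb hdisj E j x ⟨x.val / b, div_lt_aux x⟩ ⟨x.val % b, Nat.mod_lt _ hb⟩
        rfl rfl, hEg]
      rw [← hgdef j ⟨x.val / b, div_lt_aux x⟩ ⟨x.val % b, Nat.mod_lt _ hb⟩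
        (idx_lt ⟨x.val / b, div_lt_aux x⟩ ⟨x.val % b, Nat.mod_lt _ hb⟩)]
      congr 1
      exact Fin.ext (by
        show x.val / b * b + x.val % b = x.val
        rw [Nat.mul_comm (x.val / b) b]
        exact Nat.div_add_mod x.val b)
    have hchildS : childE hb hdisj E = S' := by
      ext e'
      simp only [childE, mem_image, mem_univ, true_and]
      constructor
      · rintro ⟨j, rfl⟩
        rw [hblk j]
        exact hcmem _
      · intro he'
        obtain ⟨j0, hj0⟩ := cOf_surj hle cardS'w he'
        refine ⟨π.symm j0, ?_⟩
        rw [hblk (π.symm j0), π.apply_symm_apply, hj0]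
    have hperm : permOf E = π := by
      apply Equiv.ext
      intro j
      have h1 := hpOf E j
      rw [hchildS, hblk j] at h1
      exact cOf_inj hle cardS'w h1
    exact Prod.ext (Subtype.ext hchildS) hperm
  have h1 : Nat.card (Fin w × Fin ρ ≃ {x // x ∈ S})
      = Nat.card {S' : Finset (Fin (ρ * b) ↪ Fin n) //
          IsOrderedPartition n (n / (ρ * b)) (ρ * b) S' ∧ IsChild n ρ b S S'} *
        Nat.card (Equiv.Perm (Fin w)) := by
    rw [Nat.card_eq_of_bijective G ⟨hGinj, hGsurj⟩, Nat.card_prod]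
  have h2 : Nat.card (Fin w × Fin ρ ≃ {x // x ∈ S}) = Nat.factorial (w * ρ) := by
    rw [Nat.card_eq_fintype_card, Fintype.card_equiv (Fintype.equivOfCardEq (by
      simp [Fintype.card_coe, cardS, hk]))]
    simp
  have h3 : Nat.card (Equiv.Perm (Fin w)) = Nat.factorial w := by
    rw [Nat.card_eq_fintype_card, Fintype.card_perm, Fintype.card_fin]
  have h4 : Nat.factorial (w * ρ)
      = Nat.card {S' : Finset (Fin (ρ * b) ↪ Fin n) //
          IsOrderedPartition n (n / (ρ * b)) (ρ * b) S' ∧ IsChild n ρ b S S'} *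
        Nat.factorial w := by
    rw [← h3, ← h1, h2]
  rw [show Nat.factorial (n / b) = Nat.factorial (w * ρ) by rw [hk],
    show Nat.factorial (n / (ρ * b)) = Nat.factorial w by rw [hm]]
  exact (Nat.div_eq_of_eq_mul_left (Nat.factorial_pos w) h4).symm

/-- In the permutation tree, each level-`(r-1)` partition of `Fin n`
(into `n/ρ^{r-1}` ordered blocks of size `ρ^{r-1}`) has exactly
`(n/ρ^{r-1})! / (n/ρ^r)!` children at level `r`, a child being a level-`r` partition
each of whose blocks concatenates `ρ` blocks of the parent. -/
theorem stmt5 (n ρ r : ℕ) (hρ : 0 < ρ) (hn : 0 < n) (hr : 1 ≤ r) (hd : ρ ^ r ∣ n)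
    (S : Finset (Fin (ρ ^ (r - 1)) ↪ Fin n))
    (hS : IsOrderedPartition n (n / ρ ^ (r - 1)) (ρ ^ (r - 1)) S) :
    Nat.card {S' : Finset (Fin (ρ * ρ ^ (r - 1)) ↪ Fin n) //
        IsOrderedPartition n (n / (ρ * ρ ^ (r - 1))) (ρ * ρ ^ (r - 1)) S' ∧
        IsChild n ρ (ρ ^ (r - 1)) S S'}
      = Nat.factorial (n / ρ ^ (r - 1)) / Nat.factorial (n / ρ ^ r) := by
  have hr' : ρ * ρ ^ (r - 1) = ρ ^ r := by
    rw [← pow_succ']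
    congr 1
    omega
  have hd' : ρ * ρ ^ (r - 1) ∣ n := hr' ▸ hd
  have := childCount n ρ (ρ ^ (r - 1)) hρ (pow_pos hρ _) hn hd' S hS
  rw [this, hr']
end

section
/- Base-case path-length bound: let f be a uniformly random bijection from point IDs {1,…,n} to n positions on a cycle, let each of n^{1-ε} machines hold an arbitrary fixed set of at most n^{1-ε} IDs, and let κ = 32/ε (with n large enough that (2/n^ε)^κ ≤ 1/n^4). Then with probability at least 1 - 1/n^2, no machine's ID set contains κ IDs that are mapped to κ consecutive positions. -/
/-!
For a single machine holding `S` and a window `{a, …, a + κ - 1}` of positions, a bad bijection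
restricts (through `f⁻¹`) to an injection of the window into `S`; there are
`|S|^(κ)` such injections and each extends to at most `(n - κ)!` bijections.  Since
`|S|^(κ) / n^(κ) ≤ (|S| / n)^κ ≤ (2 / n^ε)^κ ≤ n⁻⁴`, each of the `≤ n^{1-ε}` machines and `n`
windows is bad with probability at most `n⁻⁴`, and a union bound gives `n⁻²`.  A window longer
than the cycle covers every position, which a set of fewer than `n` IDs cannot do.
-/

open Real Finset
open scoped Nat

theorem card_filter_exists_mem_exists_le {ι κ X : Type*} [Fintype κ] [DecidableEq X]
    (s : Finset ι) (u : Finset X) (p : ι → κ → X → Prop)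
    [DecidablePred fun x => ∃ i ∈ s, ∃ a, p i a x] [∀ i a, DecidablePred (p i a)] :
    #{x ∈ u | ∃ i ∈ s, ∃ a, p i a x} ≤ ∑ i ∈ s, ∑ a, #{x ∈ u | p i a x} := by
  calc #{x ∈ u | ∃ i ∈ s, ∃ a, p i a x}
      ≤ #(s.biUnion fun i => univ.biUnion fun a => {x ∈ u | p i a x}) := by
        refine card_le_card fun x hx => ?_
        simp only [mem_filter, mem_biUnion, mem_univ, true_and] at hx ⊢
        obtain ⟨hxu, i, hi, a, hpx⟩ := hx
        exact ⟨i, hi, a, hxu, hpx⟩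
    _ ≤ ∑ i ∈ s, ∑ a, #{x ∈ u | p i a x} :=
        card_biUnion_le.trans (sum_le_sum fun i _ => card_biUnion_le)

section Counting

variable {α β : Type*} [Fintype α] [Fintype β] [DecidableEq α] [DecidableEq β]

theorem card_equiv_symm_extending_le (t : Finset β) (g : t ↪ α) :
    #{f : α ≃ β | ∀ y : t, f.symm y = g y} ≤ (Fintype.card β - #t)! := by
  set F : Finset (α ≃ β) := {f | ∀ y : t, f.symm y = g y}
  obtain hF | ⟨f₀, hf₀⟩ := F.eq_empty_or_nonempty
  · simp [hF]
  have hrange : ∀ f ∈ F, ∀ y, f.symm y ∈ Set.range g ↔ y ∈ t := by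
    intro f hf y
    simp only [F, mem_filter, mem_univ, true_and] at hf
    constructor
    · rintro ⟨z, hz⟩
      rw [← hf z] at hz
      exact f.symm.injective hz ▸ z.2
    · exact fun hy => ⟨⟨y, hy⟩, (hf ⟨y, hy⟩).symm⟩
  let restrict (f : F) : {y // y ∉ t} ≃ {x // x ∉ Set.range g} :=
    f.1.symm.subtypeEquiv fun y => (hrange f.1 f.2 y).not.symm
  have hinj : Function.Injective restrict := by
    rintro ⟨f, hf⟩ ⟨f', hf'⟩ h
    simp only [F, mem_filter, mem_univ, true_and] at hf hf'
    refine Subtype.ext (Equiv.symm_bijective.injective (Equiv.ext fun y => ?_))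
    by_cases hy : y ∈ t
    · exact (hf ⟨y, hy⟩).trans (hf' ⟨y, hy⟩).symm
    · exact congrArg Subtype.val (Equiv.congr_fun h ⟨y, hy⟩)
  calc #F = Fintype.card F := (Fintype.card_coe F).symm
    _ ≤ Fintype.card ({y // y ∉ t} ≃ {x // x ∉ Set.range g}) :=
        Fintype.card_le_of_injective restrict hinj
    _ = (Fintype.card β - #t)! := by
        rw [Fintype.card_equiv (restrict ⟨f₀, hf₀⟩), Fintype.card_subtype_compl, Fintype.card_coe]

theorem card_equiv_symm_mapsTo_le (s : Finset α) (t : Finset β) :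
    #{f : α ≃ β | ∀ y ∈ t, f.symm y ∈ s} ≤ (#s).descFactorial #t * (Fintype.card β - #t)! := by
  let fiber (g : t ↪ s) : Finset (α ≃ β) :=
    {f | ∀ y : t, f.symm y = g.trans (Function.Embedding.subtype _) y}
  calc #{f : α ≃ β | ∀ y ∈ t, f.symm y ∈ s}
      ≤ #((univ : Finset (t ↪ s)).biUnion fiber) := by
        refine card_le_card fun f hf => ?_
        simp only [mem_filter, mem_univ, true_and] at hf
        refine mem_biUnion.2 ⟨⟨fun y => ⟨f.symm y, hf y y.2⟩, fun y z h => ?_⟩, mem_univ _, ?_⟩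
        · exact Subtype.ext (f.symm.injective (congrArg Subtype.val h))
        · simp only [fiber, mem_filter, mem_univ, true_and]
          exact fun y => rfl
    _ ≤ ∑ g : t ↪ s, #(fiber g) := card_biUnion_le
    _ ≤ ∑ _g : t ↪ s, (Fintype.card β - #t)! :=
        sum_le_sum fun g _ => card_equiv_symm_extending_le t _
    _ = (#s).descFactorial #t * (Fintype.card β - #t)! := by
        rw [sum_const, card_univ, Fintype.card_embedding_eq, Fintype.card_coe,
          Fintype.card_coe, smul_eq_mul]

end Counting

theorem Nat.descFactorial_mul_pow_le {a n : ℕ} (h : a ≤ n) (m : ℕ) :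
    a.descFactorial m * n ^ m ≤ a ^ m * n.descFactorial m := by
  induction m with
  | zero => simp
  | succ m ih =>
    have hstep : (a - m) * n ≤ a * (n - m) := by
      rw [Nat.sub_mul, Nat.mul_sub, Nat.mul_comm m n]
      exact Nat.sub_le_sub_left (Nat.mul_le_mul_right m h) _
    calc a.descFactorial (m + 1) * n ^ (m + 1)
        = ((a - m) * n) * (a.descFactorial m * n ^ m) := by
          rw [Nat.descFactorial_succ, pow_succ]; ring
      _ ≤ (a * (n - m)) * (a ^ m * n.descFactorial m) := Nat.mul_le_mul hstep ih
      _ = a ^ (m + 1) * n.descFactorial (m + 1) := by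
          rw [Nat.descFactorial_succ, pow_succ]; ring

theorem Nat.descFactorial_mul_factorial_sub_le {a n m : ℕ} (ha : a ≤ n) (hm : m ≤ n) :
    (a.descFactorial m * (n - m)! : ℝ) ≤ ((a : ℝ) / n) ^ m * n ! := by
  obtain rfl | hn := n.eq_zero_or_pos
  · obtain rfl : m = 0 := by omega
    simp
  have hnm : (0 : ℝ) < (n : ℝ) ^ m := by positivity
  have key : (a.descFactorial m : ℝ) * n ^ m ≤ a ^ m * n.descFactorial m := by
    exact_mod_cast Nat.descFactorial_mul_pow_le ha m
  rw [div_pow, ← Nat.factorial_mul_descFactorial hm, div_mul_eq_mul_div, le_div_iff₀ hnm]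
  push_cast
  calc (a.descFactorial m : ℝ) * (n - m)! * n ^ m = (n - m)! * (a.descFactorial m * n ^ m) := by
        ring
    _ ≤ (n - m)! * (a ^ m * n.descFactorial m) := by gcongr
    _ = a ^ m * ((n - m)! * n.descFactorial m) := by ring

theorem ZMod.card_image_add_natCast_range {n m : ℕ} (a : ZMod n) (hm : m ≤ n) :
    #((range m).image fun j : ℕ => a + j) = m := by
  rw [Finset.card_image_of_injOn, card_range]
  intro j hj k hk h
  exact CharP.natCast_injOn_Iio (ZMod n) n (by simp only [coe_range, Set.mem_Iio] at hj ⊢; omega)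
    (by simp only [coe_range, Set.mem_Iio] at hk ⊢; omega)
    (add_left_cancel h)

theorem card_equiv_window_subset_image_le {n κ : ℕ} [NeZero n] (S : Finset (Fin n)) (a : ZMod n) :
    #{f : Fin n ≃ ZMod n | ∀ j ∈ range κ, ∃ x ∈ S, f x = a + j}
      ≤ (#S).descFactorial (min κ n) * (n - min κ n)! := by
  set t := (range (min κ n)).image fun j : ℕ => a + j
  have ht : #t = min κ n := ZMod.card_image_add_natCast_range a (min_le_right κ n)
  calc _ ≤ #{f : Fin n ≃ ZMod n | ∀ y ∈ t, f.symm y ∈ S} := by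
        refine card_le_card fun f hf => ?_
        simp only [mem_filter, mem_univ, true_and] at hf ⊢
        intro y hy
        obtain ⟨j, hj, rfl⟩ := mem_image.1 hy
        obtain ⟨x, hx, hfx⟩ := hf j (by simp only [mem_range] at hj ⊢; omega)
        rwa [← hfx, Equiv.symm_apply_apply]
    _ ≤ _ := card_equiv_symm_mapsTo_le S t
    _ = _ := by rw [ht, ZMod.card]

theorem card_equiv_window_subset_image_le_factorial_div {ε : ℝ} (hε : 0 < ε) {n κ : ℕ}
    [NeZero n] (hn : 1 < n) {S : Finset (Fin n)} (hS : (#S : ℝ) ≤ (n : ℝ) ^ (1 - ε))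
    (hlarge : (2 / (n : ℝ) ^ ε) ^ κ ≤ 1 / (n : ℝ) ^ 4) (a : ZMod n) :
    (#{f : Fin n ≃ ZMod n | ∀ j ∈ range κ, ∃ x ∈ S, f x = a + j} : ℝ) ≤ n ! / n ^ 4 := by
  have hcount := card_equiv_window_subset_image_le (κ := κ) S a
  have hSn : #S ≤ n := by simpa using card_le_univ S
  have hnR : (1 : ℝ) < n := by exact_mod_cast hn
  obtain hκn | hnκ := le_or_gt κ n
  · rw [min_eq_left hκn] at hcount
    have hfrac : (#S : ℝ) / n ≤ 2 / n ^ ε := by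
      rw [div_le_div_iff₀ (by positivity) (by positivity)]
      calc (#S : ℝ) * n ^ ε ≤ n ^ (1 - ε) * n ^ ε := by gcongr
        _ = n := by rw [← rpow_add (by positivity)]; simp
        _ ≤ 2 * n := by linarith
    calc _ ≤ ((#S).descFactorial κ * (n - κ)! : ℝ) := by exact_mod_cast hcount
      _ ≤ (#S / n) ^ κ * n ! := Nat.descFactorial_mul_factorial_sub_le hSn hκn
      _ ≤ (2 / n ^ ε) ^ κ * n ! := by gcongr
      _ ≤ 1 / n ^ 4 * n ! := by gcongr
      _ = n ! / n ^ 4 := by ring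
  · have hSlt : #S < n := by
      have : (n : ℝ) ^ (1 - ε) < n := by
        calc _ < (n : ℝ) ^ (1 : ℝ) := rpow_lt_rpow_of_exponent_lt hnR (by linarith)
          _ = n := rpow_one _
      exact_mod_cast hS.trans_lt this
    rw [min_eq_right hnκ.le, Nat.descFactorial_eq_zero_iff_lt.2 hSlt, zero_mul, Nat.le_zero,
      card_eq_zero] at hcount
    rw [hcount, card_empty, Nat.cast_zero]
    positivity

theorem one_sub_le_card_filter_not_div {X : Type*} [Fintype X] [Nonempty X] (p : X → Prop)
    [DecidablePred p] {δ : ℝ} (h : (#{x | p x} : ℝ) ≤ δ * Fintype.card X) :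
    1 - δ ≤ (#{x | ¬ p x} : ℝ) / Fintype.card X := by
  have hsplit := card_filter_add_card_filter_not (s := univ) p
  rw [card_univ] at hsplit
  have hpos : (0 : ℝ) < Fintype.card X := by exact_mod_cast Fintype.card_pos
  rw [le_div_iff₀ hpos]
  have : (#{x | p x} : ℝ) + #{x | ¬ p x} = Fintype.card X := by exact_mod_cast hsplit
  linarith

theorem stmt15_general {ι : Type*} (ε : ℝ) (hε0 : 0 < ε)
    (n κ : ℕ) [NeZero n]
    (machines : Finset ι) (A : ι → Finset (Fin n))
    (hmach : (machines.card : ℝ) ≤ (n : ℝ) ^ ((1 : ℝ) - ε))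
    (hA : ∀ i ∈ machines, ((A i).card : ℝ) ≤ (n : ℝ) ^ ((1 : ℝ) - ε))
    (hlarge : (2 / (n : ℝ) ^ ε) ^ κ ≤ 1 / (n : ℝ) ^ (4 : ℕ)) :
    (1 : ℝ) - 1 / (n : ℝ) ^ 2 ≤
      ((Finset.univ.filter (fun f : Fin n ≃ ZMod n =>
          ¬ ∃ i ∈ machines, ∃ a : ZMod n,
            ∀ j ∈ Finset.range κ, ∃ x ∈ A i, f x = a + (j : ZMod n))).card : ℝ)
        / (Nat.factorial n : ℝ) := by
  have hcard : Fintype.card (Fin n ≃ ZMod n) = n ! := by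
    rw [Fintype.card_equiv (ZMod.finEquiv n).toEquiv, Fintype.card_fin]
  have : Nonempty (Fin n ≃ ZMod n) := ⟨(ZMod.finEquiv n).toEquiv⟩
  rw [← hcard]
  obtain rfl | hn1 := eq_or_ne n 1
  · rw [Nat.cast_one, one_pow, div_one, sub_self]
    positivity
  have hn : 1 < n := by have := NeZero.pos n; omega
  refine one_sub_le_card_filter_not_div _ ?_
  rw [hcard]
  calc _ ≤ ∑ i ∈ machines, ∑ a : ZMod n,
        (#{f : Fin n ≃ ZMod n | ∀ j ∈ range κ, ∃ x ∈ A i, f x = a + j} : ℝ) := by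
        exact_mod_cast card_filter_exists_mem_exists_le machines univ
          fun i (a : ZMod n) (f : Fin n ≃ ZMod n) => ∀ j ∈ range κ, ∃ x ∈ A i, f x = a + j
    _ ≤ ∑ i ∈ machines, ∑ _a : ZMod n, (n ! / n ^ 4 : ℝ) :=
        sum_le_sum fun i hi => sum_le_sum fun a _ =>
          card_equiv_window_subset_image_le_factorial_div hε0 hn (hA i hi) hlarge a
    _ = #machines * n * (n ! / n ^ 4 : ℝ) := by simp [ZMod.card, mul_assoc]
    _ ≤ n ^ (1 - ε) * n * (n ! / n ^ 4 : ℝ) := by gcongr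
    _ ≤ n * n * (n ! / n ^ 4 : ℝ) := by
        gcongr
        exact rpow_le_self_of_one_le (by exact_mod_cast hn.le) (by linarith)
    _ = 1 / n ^ 2 * n ! := by field_simp

/-- base-case path-length bound: let `f` be a uniformly random bijection
from the `n` point IDs to `n` positions in cyclic order, let each of at most `n^{1-ε}`
machines `i` hold a fixed set `A i` of at most `n^{1-ε}` IDs, and let `κ = 32/ε`, with
`n` large enough that `(2/n^ε)^κ ≤ 1/n^4`.  Then with probability at least `1 - 1/n²`,
no machine's ID set contains `κ` IDs that are mapped to `κ` consecutive positions. -/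
theorem stmt15 {ι : Type*} (ε : ℝ) (hε0 : 0 < ε) (hε1 : ε < 1)
    (n κ : ℕ) [NeZero n] (hκ : (κ : ℝ) = 32 / ε)
    (machines : Finset ι) (A : ι → Finset (Fin n))
    (hmach : (machines.card : ℝ) ≤ (n : ℝ) ^ ((1 : ℝ) - ε))
    (hA : ∀ i ∈ machines, ((A i).card : ℝ) ≤ (n : ℝ) ^ ((1 : ℝ) - ε))
    (hlarge : (2 / (n : ℝ) ^ ε) ^ κ ≤ 1 / (n : ℝ) ^ (4 : ℕ)) :
    (1 : ℝ) - 1 / (n : ℝ) ^ 2 ≤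
      ((Finset.univ.filter (fun f : Fin n ≃ ZMod n =>
          ¬ ∃ i ∈ machines, ∃ a : ZMod n,
            ∀ j ∈ Finset.range κ, ∃ x ∈ A i, f x = a + (j : ZMod n))).card : ℝ)
        / (Nat.factorial n : ℝ) :=
  stmt15_general ε hε0 n κ machines A hmach hA hlarge
end
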